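/- Let M be a symmetric positive definite p×p real matrix, θ⁰ ∈ ℝᵖ, K ≥ 0, let I : ℝᵖ → ℝ satisfy I(θ) = ½ (θ − θ⁰)ᵀ M (θ − θ⁰) + o(‖θ − θ⁰‖²) as θ → θ⁰, and let h : ℝᵖ → ℝ be differentiable at θ⁰ with gradient c ≠ 0, so that h(θ) − h(θ⁰) = cᵀ(θ − θ⁰) + o(‖θ − θ⁰‖). Then lim_{δ → 0⁺} inf { 2 I(θ) (1/(h(θ⁰) − h(θ))² + K) : 0 < ‖θ − θ⁰‖ ≤ δ, h(θ) ≠ h(θ⁰) } = (cᵀ M⁻¹ c)⁻¹. -/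

import Mathlib

/-!
Write `u = θ - θ₀` and `q = uᵀ M u`. Cauchy–Schwarz for the inner product of `M` gives
`(cᵀ u)² ≤ (cᵀ M⁻¹ c) q`, with equality along `w = M⁻¹ c`. Near `θ₀` we have `2 I ≈ q` and
`h θ - h θ₀ ≈ cᵀ u`, so on small punctured balls the criterion is at least
`2 I / (h θ - h θ₀)² ≥ (cᵀ M⁻¹ c)⁻¹ - o(1)`, while along the line `θ₀ + s w` it tends to exactly
`(cᵀ M⁻¹ c)⁻¹`. The infimum over the punctured `δ`-ball is squeezed between the two.
-/

open Filter Topology Asymptotics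

theorem tendsto_sInf_punctured_closedBall {E : Type*} [NormedAddCommGroup E] {x₀ : E}
    {P : E → Prop} {F : E → ℝ} {L : ℝ}
    (hlow : ∀ a < L, ∀ᶠ x in 𝓝[≠] x₀, P x → a < F x)
    (hup : ∀ b > L, ∃ᶠ x in 𝓝[≠] x₀, P x ∧ F x < b) :
    Tendsto (fun δ : ℝ => sInf {v | ∃ x, 0 < ‖x - x₀‖ ∧ ‖x - x₀‖ ≤ δ ∧ P x ∧ v = F x})
      (𝓝[>] 0) (𝓝 L) := by
  set S : ℝ → Set ℝ := fun δ => {v | ∃ x, 0 < ‖x - x₀‖ ∧ ‖x - x₀‖ ≤ δ ∧ P x ∧ v = F x}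
  have witness : ∀ b > L, ∀ δ > 0, ∃ x, F x ∈ S δ ∧ F x < b := by
    intro b hb δ hδ
    have hball : ∀ᶠ x in 𝓝[≠] x₀, x ≠ x₀ ∧ ‖x - x₀‖ < δ := by
      refine eventually_mem_nhdsWithin.and (nhdsWithin_le_nhds ?_)
      exact Metric.eventually_nhds_iff.mpr ⟨δ, hδ, fun x hx => by rwa [dist_eq_norm] at hx⟩
    obtain ⟨x, ⟨hPx, hFx⟩, hx, hxδ⟩ := ((hup b hb).and_eventually hball).exists
    exact ⟨x, ⟨x, norm_pos_iff.mpr (sub_ne_zero.mpr hx), hxδ.le, hPx, rfl⟩, hFx⟩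
  have lower : ∀ a < L, ∀ᶠ δ in 𝓝[>] (0 : ℝ), ∀ v ∈ S δ, a < v := by
    intro a ha
    obtain ⟨r, hr, hball⟩ :=
      Metric.eventually_nhds_iff.mp (eventually_nhdsWithin_iff.mp (hlow a ha))
    filter_upwards [Ioo_mem_nhdsGT hr] with δ hδ
    rintro _ ⟨x, hx, hxδ, hPx, rfl⟩
    exact hball (by rw [dist_eq_norm]; linarith [hδ.2]) (sub_ne_zero.mp (norm_pos_iff.mp hx)) hPx
  rw [tendsto_order]
  refine ⟨fun a ha => ?_, fun b hb => ?_⟩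
  · obtain ⟨a', haa', ha'L⟩ := exists_between ha
    filter_upwards [lower a' ha'L, self_mem_nhdsWithin] with δ hδ (hδ₀ : 0 < δ)
    obtain ⟨x, hx, -⟩ := witness (L + 1) (by linarith) δ hδ₀
    exact haa'.trans_le (le_csInf ⟨_, hx⟩ fun v hv => (hδ v hv).le)
  · filter_upwards [lower (L - 1) (by linarith), self_mem_nhdsWithin] with δ hδ (hδ₀ : 0 < δ)
    obtain ⟨x, hx, hFx⟩ := witness b hb δ hδ₀
    exact (csInf_le ⟨L - 1, fun v hv => (hδ v hv).le⟩ hx).trans_lt hFx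

theorem abs_add_le_sqrt_mul {t e q B : ℝ} (hq : 0 < q) (ht : t ^ 2 ≤ B * q) :
    |t + e| ≤ √q * (√B + |e / √q|) := by
  have hsq : 0 < √q := Real.sqrt_pos.mpr hq
  rw [abs_div, abs_of_pos hsq, mul_add, mul_div_cancel₀ _ hsq.ne', mul_comm,
    ← Real.sqrt_mul' _ hq.le]
  exact (abs_add_le t e).trans (add_le_add_left (Real.abs_le_sqrt ht) _)

theorem div_div_sq_le_mul_one_div_sq_add {y q d s K : ℝ} (hy : 0 ≤ y) (hq : 0 < q)
    (hK : 0 ≤ K) (hd : d ≠ 0) (hds : |d| ≤ √q * s) :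
    y / q / s ^ 2 ≤ y * (1 / d ^ 2 + K) := by
  have hd2 : d ^ 2 ≤ q * s ^ 2 := by
    calc d ^ 2 = |d| ^ 2 := (sq_abs d).symm
      _ ≤ (√q * s) ^ 2 := by gcongr
      _ = q * s ^ 2 := by rw [mul_pow, Real.sq_sqrt hq.le]
  calc y / q / s ^ 2 = y / (q * s ^ 2) := by rw [div_div]
    _ ≤ y / d ^ 2 := div_le_div_of_nonneg_left hy (by positivity) hd2
    _ ≤ y * (1 / d ^ 2 + K) := by
      rw [div_eq_mul_one_div]; gcongr; linarith

namespace Matrix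

variable {n : Type*} [Fintype n] {M : Matrix n n ℝ}

theorem PosSemidef.sq_dotProduct_mulVec_le (hM : M.PosSemidef) (x y : n → ℝ) :
    (x ⬝ᵥ M *ᵥ y) ^ 2 ≤ (x ⬝ᵥ M *ᵥ x) * (y ⬝ᵥ M *ᵥ y) := by
  let := M.toSeminormedAddCommGroup hM
  let := M.toInnerProductSpace hM
  have hinner (a b : n → ℝ) : inner ℝ a b = a ⬝ᵥ M *ᵥ b := by
    change (M *ᵥ b) ⬝ᵥ star a = _
    rw [star_trivial, dotProduct_comm]
  have hCS := real_inner_mul_inner_self_le x y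
  rwa [hinner, hinner, hinner, ← sq] at hCS

variable [DecidableEq n]

theorem mulVec_nonsing_inv_mulVec (hM : IsUnit M.det) (v : n → ℝ) : M *ᵥ M⁻¹ *ᵥ v = v := by
  rw [mulVec_mulVec, mul_nonsing_inv _ hM, one_mulVec]

/-- Cauchy–Schwarz for the inner product of `M`, applied to `M⁻¹ v` and `u`. -/
theorem PosDef.sq_dotProduct_le (hM : M.PosDef) (v u : n → ℝ) :
    (v ⬝ᵥ u) ^ 2 ≤ (v ⬝ᵥ M⁻¹ *ᵥ v) * (u ⬝ᵥ M *ᵥ u) := by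
  have hMM := mulVec_nonsing_inv_mulVec ((isUnit_iff_isUnit_det M).mp hM.isUnit) v
  have hsymm (x y : n → ℝ) : x ⬝ᵥ M *ᵥ y = y ⬝ᵥ M *ᵥ x := by
    rw [dotProduct_mulVec, ← mulVec_transpose, ← conjTranspose_eq_transpose_of_trivial,
      hM.isHermitian.eq, dotProduct_comm]
  have hCS := hM.posSemidef.sq_dotProduct_mulVec_le (M⁻¹ *ᵥ v) u
  rwa [hMM, hsymm, hMM, dotProduct_comm, dotProduct_comm (M⁻¹ *ᵥ v)] at hCS

/-- The case `v = u` of `PosDef.sq_dotProduct_le`, after bounding the form of `M⁻¹` by its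
operator norm. -/
theorem PosDef.norm_sq_le (hM : M.PosDef) (u : EuclideanSpace ℝ n) :
    ‖u‖ ^ 2 ≤ ‖toEuclideanCLM (𝕜 := ℝ) M⁻¹‖ * (u.ofLp ⬝ᵥ M *ᵥ u.ofLp) := by
  set T := toEuclideanCLM (𝕜 := ℝ) M⁻¹
  have hnorm : ‖u‖ ^ 2 = u.ofLp ⬝ᵥ u.ofLp := by
    rw [← real_inner_self_eq_norm_sq, EuclideanSpace.inner_eq_star_dotProduct, star_trivial]
  have hT : u.ofLp ⬝ᵥ M⁻¹ *ᵥ u.ofLp ≤ ‖T‖ * ‖u‖ ^ 2 := by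
    rw [← inner_toEuclideanCLM]
    calc inner ℝ u (T u) ≤ ‖u‖ * ‖T u‖ := real_inner_le_norm _ _
      _ ≤ ‖u‖ * (‖T‖ * ‖u‖) := by gcongr; exact T.le_opNorm u
      _ = ‖T‖ * ‖u‖ ^ 2 := by ring
  have hQ : 0 ≤ u.ofLp ⬝ᵥ M *ᵥ u.ofLp := by
    simpa using hM.posSemidef.dotProduct_mulVec_nonneg u.ofLp
  have hCS := hM.sq_dotProduct_le u.ofLp u.ofLp
  rw [← hnorm] at hCS
  rcases (norm_nonneg u).eq_or_lt with hu | hu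
  · rw [← hu]; simpa using mul_nonneg (norm_nonneg T) hQ
  · have : ‖u‖ ^ 2 * ‖u‖ ^ 2 ≤ ‖u‖ ^ 2 * (‖T‖ * (u.ofLp ⬝ᵥ M *ᵥ u.ofLp)) := by
      nlinarith
    exact le_of_mul_le_mul_left this (by positivity)

end Matrix

noncomputable def extendedCriterion {E : Type*} (I h : E → ℝ) (θ₀ : E) (K : ℝ) (θ : E) : ℝ :=
  2 * I θ * (1 / (h θ₀ - h θ) ^ 2 + K)

section QuadraticExpansion

variable {E : Type*} [NormedAddCommGroup E] [NormedSpace ℝ E] {Q : QuadraticForm ℝ E}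
  {ℓ : E →L[ℝ] ℝ} {I h : E → ℝ} {θ₀ : E} {B C K : ℝ}

/-- Normalizing by `q = Q (θ - θ₀)`: `2 I / q → 1`, and `|h θ - h θ₀| / √q ≤ √B + o(1)` since
`ℓ² ≤ B Q`. -/
theorem eventually_lt_extendedCriterion (hB : 0 < B) (hK : 0 ≤ K)
    (hQ : ∀ u, ‖u‖ ^ 2 ≤ C * Q u) (hℓ : ∀ u, ℓ u ^ 2 ≤ B * Q u)
    (hI : (fun θ => I θ - 1 / 2 * Q (θ - θ₀)) =o[𝓝 θ₀] fun θ => ‖θ - θ₀‖ ^ 2)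
    (hh : HasFDerivAt h ℓ θ₀) :
    ∀ a < B⁻¹, ∀ᶠ θ in 𝓝[≠] θ₀, h θ ≠ h θ₀ → a < extendedCriterion I h θ₀ K θ := by
  intro a ha
  have hQ_nonneg (u : E) : 0 ≤ Q u :=
    nonneg_of_mul_nonneg_right ((sq_nonneg _).trans (hℓ u)) hB
  have hQ_pos : ∀ᶠ θ in 𝓝[≠] θ₀, 0 < Q (θ - θ₀) := by
    filter_upwards [self_mem_nhdsWithin] with θ (hθ : θ ≠ θ₀)
    refine (hQ_nonneg _).lt_of_ne' fun hzero => ?_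
    have := hQ (θ - θ₀)
    rw [hzero, mul_zero] at this
    exact (pow_pos (norm_pos_iff.mpr (sub_ne_zero.mpr hθ)) 2).not_ge this
  have hsq : (fun θ => ‖θ - θ₀‖ ^ 2) =O[𝓝 θ₀] fun θ => Q (θ - θ₀) :=
    IsBigO.of_bound C (Eventually.of_forall fun θ => by
      simpa [abs_of_nonneg (hQ_nonneg _)] using hQ (θ - θ₀))
  have hnorm : (fun θ => ‖θ - θ₀‖) =O[𝓝 θ₀] fun θ => √(Q (θ - θ₀)) :=
    IsBigO.of_bound √C (Eventually.of_forall fun θ => by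
      rw [norm_norm, Real.norm_of_nonneg (Real.sqrt_nonneg _), ← Real.sqrt_mul' _ (hQ_nonneg _)]
      exact (le_abs_self _).trans (Real.abs_le_sqrt (hQ _)))
  have hIq : Tendsto (fun θ => 2 * I θ / Q (θ - θ₀)) (𝓝[≠] θ₀) (𝓝 1) := by
    have hequiv : (fun θ => 2 * I θ) ~[𝓝[≠] θ₀] fun θ => Q (θ - θ₀) :=
      ((hI.const_mul_left 2).trans_isBigO hsq).mono nhdsWithin_le_nhds |>.congr_left
        fun θ => by simp only [Pi.sub_apply]; ring
    exact (isEquivalent_iff_tendsto_one (hQ_pos.mono fun _ => ne_of_gt)).mp hequiv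
  have herr : Tendsto (fun θ => (h θ - h θ₀ - ℓ (θ - θ₀)) / √(Q (θ - θ₀))) (𝓝[≠] θ₀) (𝓝 0) :=
    ((hh.isLittleO.norm_right.trans_isBigO hnorm).mono nhdsWithin_le_nhds).tendsto_div_nhds_zero
  have hlower : Tendsto (fun θ => 2 * I θ / Q (θ - θ₀) /
      (√B + |(h θ - h θ₀ - ℓ (θ - θ₀)) / √(Q (θ - θ₀))|) ^ 2) (𝓝[≠] θ₀) (𝓝 B⁻¹) := by
    have := hIq.div (((tendsto_const_nhds (x := √B)).add herr.abs).pow 2) (by positivity)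
    rwa [abs_zero, add_zero, Real.sq_sqrt hB.le, one_div] at this
  filter_upwards [(tendsto_order.1 hlower).1 a ha, hQ_pos,
    (tendsto_order.1 hIq).1 0 one_pos] with θ hθ hqθ hIθ hne
  refine hθ.trans_le (div_div_sq_le_mul_one_div_sq_add ?_ hqθ hK (sub_ne_zero.mpr hne.symm) ?_)
  · exact (div_pos_iff_of_pos_right hqθ).mp hIθ |>.le
  · rw [← abs_neg, neg_sub]
    convert abs_add_le_sqrt_mul hqθ (hℓ (θ - θ₀)) using 2
    ring

theorem tendsto_div_sq_along_line
    (hI : (fun θ => I θ - 1 / 2 * Q (θ - θ₀)) =o[𝓝 θ₀] fun θ => ‖θ - θ₀‖ ^ 2) (w : E) :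
    Tendsto (fun s : ℝ => 2 * I (θ₀ + s • w) / s ^ 2) (𝓝[≠] 0) (𝓝 (Q w)) := by
  have hline : Tendsto (fun s : ℝ => θ₀ + s • w) (𝓝 0) (𝓝 θ₀) :=
    Continuous.tendsto' (by fun_prop) 0 θ₀ (by simp)
  have hrem : (fun s : ℝ => 2 * I (θ₀ + s • w) - s ^ 2 * Q w) =o[𝓝 0] fun s => s ^ 2 := by
    refine (((hI.comp_tendsto hline).const_mul_left 2).trans_isBigO ?_).congr_left fun s => ?_
    · exact IsBigO.of_bound (‖w‖ ^ 2) (Eventually.of_forall fun s => by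
        simp [norm_smul, mul_pow, mul_comm])
    · simp [QuadraticMap.map_smul]; ring
  have hlim := ((hrem.mono (nhdsWithin_le_nhds (s := {0}ᶜ))).tendsto_div_nhds_zero).add_const (Q w)
  rw [zero_add] at hlim
  refine hlim.congr' ?_
  filter_upwards [self_mem_nhdsWithin] with s (hs : s ≠ 0)
  field_simp
  ring

theorem tendsto_slope_along_line (hh : HasFDerivAt h ℓ θ₀) (w : E) :
    Tendsto (fun s : ℝ => (h (θ₀ + s • w) - h θ₀) / s) (𝓝[≠] 0) (𝓝 (ℓ w)) := by
  have hline : HasDerivAt (fun s : ℝ => θ₀ + s • w) w 0 :=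
    ((hasDerivAt_id 0).smul_const w).const_add θ₀ |>.congr_deriv (one_smul ℝ w)
  refine (hasDerivAt_iff_tendsto_slope_zero.mp
    (hh.comp_hasDerivAt_of_eq 0 hline (by simp))).congr fun s => ?_
  simp [div_eq_inv_mul]

theorem tendsto_extendedCriterion_along_line
    (hI : (fun θ => I θ - 1 / 2 * Q (θ - θ₀)) =o[𝓝 θ₀] fun θ => ‖θ - θ₀‖ ^ 2)
    (hh : HasFDerivAt h ℓ θ₀) (w : E) (hw : ℓ w ≠ 0) :
    Tendsto (fun s : ℝ => extendedCriterion I h θ₀ K (θ₀ + s • w)) (𝓝[≠] 0)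
      (𝓝 (Q w / ℓ w ^ 2)) := by
  have hK : Tendsto (fun s : ℝ => s ^ 2 * K) (𝓝[≠] 0) (𝓝 0) :=
    (Continuous.tendsto' (by fun_prop) 0 0 (by simp)).mono_left nhdsWithin_le_nhds
  have hlim := (tendsto_div_sq_along_line hI w).mul
    (((tendsto_slope_along_line hh w).pow 2).inv₀ (pow_ne_zero 2 hw) |>.add hK)
  rw [add_zero, ← div_eq_mul_inv] at hlim
  refine hlim.congr' ?_
  filter_upwards [self_mem_nhdsWithin] with s (hs : s ≠ 0)
  simp only [extendedCriterion]
  field_simp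
  ring

theorem frequently_extendedCriterion_lt
    (hI : (fun θ => I θ - 1 / 2 * Q (θ - θ₀)) =o[𝓝 θ₀] fun θ => ‖θ - θ₀‖ ^ 2)
    (hh : HasFDerivAt h ℓ θ₀) {w : E} (hw : ℓ w ≠ 0) :
    ∀ b > Q w / ℓ w ^ 2, ∃ᶠ θ in 𝓝[≠] θ₀, h θ ≠ h θ₀ ∧ extendedCriterion I h θ₀ K θ < b := by
  intro b hb
  have hw₀ : w ≠ 0 := fun hzero => hw (by rw [hzero, map_zero])
  have hline : Tendsto (fun s : ℝ => θ₀ + s • w) (𝓝[≠] 0) (𝓝[≠] θ₀) := by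
    refine tendsto_nhdsWithin_iff.mpr ⟨?_, eventually_mem_nhdsWithin.mono fun s hs => ?_⟩
    · exact (Continuous.tendsto' (by fun_prop) 0 θ₀ (by simp)).mono_left nhdsWithin_le_nhds
    · simpa [hw₀] using hs
  have hne : ∀ᶠ s in 𝓝[≠] (0 : ℝ), h (θ₀ + s • w) ≠ h θ₀ :=
    ((tendsto_slope_along_line hh w).eventually_ne hw).mono fun s hs heq => hs (by simp [heq])
  have hlt := (tendsto_extendedCriterion_along_line (K := K) hI hh w hw).eventually (gt_mem_nhds hb)
  exact hline.frequently (hne.and hlt).frequently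

theorem tendsto_sInf_extendedCriterion (hB : 0 < B) (hK : 0 ≤ K)
    (hQ : ∀ u, ‖u‖ ^ 2 ≤ C * Q u) (hℓ : ∀ u, ℓ u ^ 2 ≤ B * Q u) {w : E}
    (hw : ℓ w ^ 2 = B * Q w) (hw₀ : ℓ w ≠ 0)
    (hI : (fun θ => I θ - 1 / 2 * Q (θ - θ₀)) =o[𝓝 θ₀] fun θ => ‖θ - θ₀‖ ^ 2)
    (hh : HasFDerivAt h ℓ θ₀) :
    Tendsto (fun δ : ℝ => sInf {v | ∃ θ, 0 < ‖θ - θ₀‖ ∧ ‖θ - θ₀‖ ≤ δ ∧ h θ ≠ h θ₀ ∧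
      v = extendedCriterion I h θ₀ K θ}) (𝓝[>] 0) (𝓝 B⁻¹) := by
  have hratio : Q w / ℓ w ^ 2 = B⁻¹ := by
    have hQw : Q w ≠ 0 := fun hzero => hw₀ (by simpa [hzero] using hw)
    rw [hw]; field_simp
  refine tendsto_sInf_punctured_closedBall
    (eventually_lt_extendedCriterion hB hK hQ hℓ hI hh) fun b hb => ?_
  exact frequently_extendedCriterion_lt hI hh hw₀ b (hratio ▸ hb)

end QuadraticExpansion

theorem extended_c_optimality_limit_general
    {p : ℕ} (M : Matrix (Fin p) (Fin p) ℝ)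
    (hM : M.PosDef)
    (θ0 : EuclideanSpace ℝ (Fin p)) (K : ℝ) (hK : 0 ≤ K)
    (I : EuclideanSpace ℝ (Fin p) → ℝ)
    (hI : (fun θ => I θ - (1 / 2) * dotProduct (fun i => (θ - θ0) i)
        (M.mulVec (fun i => (θ - θ0) i)))
      =o[nhds θ0] fun θ => ‖θ - θ0‖ ^ 2)
    (h : EuclideanSpace ℝ (Fin p) → ℝ) (c : EuclideanSpace ℝ (Fin p))
    (hc : HasGradientAt h c θ0) (hc0 : c ≠ 0) :
    Tendsto
      (fun δ : ℝ => sInf {v : ℝ | ∃ θ : EuclideanSpace ℝ (Fin p),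
        0 < ‖θ - θ0‖ ∧ ‖θ - θ0‖ ≤ δ ∧ h θ ≠ h θ0 ∧
        v = 2 * I θ * (1 / (h θ0 - h θ) ^ 2 + K)})
      (nhdsWithin 0 (Set.Ioi 0))
      (nhds (dotProduct (fun i => c i) (M⁻¹.mulVec (fun i => c i)))⁻¹) := by
  let Q : QuadraticForm ℝ (EuclideanSpace ℝ (Fin p)) :=
    M.toQuadraticForm'.comp (WithLp.linearEquiv 2 ℝ (Fin p → ℝ)).toLinearMap
  let ℓ := InnerProductSpace.toDual ℝ (EuclideanSpace ℝ (Fin p)) c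
  have hQ (u : EuclideanSpace ℝ (Fin p)) : Q u = u.ofLp ⬝ᵥ M.mulVec u.ofLp := by
    simp [Q, Matrix.toQuadraticForm', Matrix.toLinearMap₂'_apply']
  have hℓ (u : EuclideanSpace ℝ (Fin p)) : ℓ u = c.ofLp ⬝ᵥ u.ofLp := by
    simp [ℓ, EuclideanSpace.inner_eq_star_dotProduct, dotProduct_comm]
  set B := dotProduct (fun i => c i) (M⁻¹.mulVec (fun i => c i))
  have hB : 0 < B := by
    simpa using hM.inv.dotProduct_mulVec_pos (x := c.ofLp) (by simpa using hc0)
  let w := WithLp.toLp 2 (M⁻¹.mulVec c.ofLp)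
  have hℓw : ℓ w = B := hℓ w
  have hQw : Q w = B := by
    rw [hQ, Matrix.mulVec_nonsing_inv_mulVec ((M.isUnit_iff_isUnit_det).mp hM.isUnit),
      dotProduct_comm]
  refine tendsto_sInf_extendedCriterion (Q := Q) (ℓ := ℓ) (w := w)
    (C := ‖Matrix.toEuclideanCLM (𝕜 := ℝ) M⁻¹‖) hB hK (fun u => ?_) (fun u => ?_)
    (by rw [hℓw, hQw, sq]) (hℓw ▸ hB.ne') (by simpa only [hQ] using hI)
    (hasGradientAt_iff_hasFDerivAt.mp hc)
  · rw [hQ]; exact hM.norm_sq_le u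
  · rw [hℓ, hQ]; exact hM.sq_dotProduct_le _ _

/-- **Theorem 1, extended c-optimality case (nonsingular).** If `I` has quadratic
expansion `I(θ) = ½ (θ−θ0)ᵀ M (θ−θ0) + o(‖θ−θ0‖²)` with `M` symmetric positive
definite, `K ≥ 0`, and `h` is differentiable at `θ0` with nonzero gradient `c`, then
`inf { 2 I(θ) (1/(h(θ0)−h(θ))² + K) : 0 < ‖θ−θ0‖ ≤ δ, h(θ) ≠ h(θ0) }` tends, as
`δ → 0⁺`, to `(cᵀ M⁻¹ c)⁻¹`. -/
theorem extended_c_optimality_limit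
    {p : ℕ} (M : Matrix (Fin p) (Fin p) ℝ)
    (hMsymm : M.IsSymm) (hM : M.PosDef)
    (θ0 : EuclideanSpace ℝ (Fin p)) (K : ℝ) (hK : 0 ≤ K)
    (I : EuclideanSpace ℝ (Fin p) → ℝ)
    (hI : (fun θ => I θ - (1 / 2) * dotProduct (fun i => (θ - θ0) i)
        (M.mulVec (fun i => (θ - θ0) i)))
      =o[nhds θ0] fun θ => ‖θ - θ0‖ ^ 2)
    (h : EuclideanSpace ℝ (Fin p) → ℝ) (c : EuclideanSpace ℝ (Fin p))
    (hc : HasGradientAt h c θ0) (hc0 : c ≠ 0) :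
    Tendsto
      (fun δ : ℝ => sInf {v : ℝ | ∃ θ : EuclideanSpace ℝ (Fin p),
        0 < ‖θ - θ0‖ ∧ ‖θ - θ0‖ ≤ δ ∧ h θ ≠ h θ0 ∧
        v = 2 * I θ * (1 / (h θ0 - h θ) ^ 2 + K)})
      (nhdsWithin 0 (Set.Ioi 0))
      (nhds (dotProduct (fun i => c i) (M⁻¹.mulVec (fun i => c i)))⁻¹) :=
  extended_c_optimality_limit_general M hM θ0 K hK I hI h c hc hc0
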